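/- Let S be a non-negatively graded commutative Noetherian ring such that S^0 either contains an infinite field or is a local ring with infinite residue field, and let M be a finitely generated non-negatively graded S-module. Then either M^n = 0 for all sufficiently large n, or there exist integers d > 0 and m_0 and an integer j with 0 ≤ j < d such that M^n ≠ 0 for every n ≥ m_0 with n ≡ j (mod d). Moreover, d may be taken to be the least common multiple of the degrees of any set of homogeneous elements of positive degree generating S as an algebra over S^0. -/

import Mathlib

/-!
Let `d` be the lcm of the degrees `dᵢ` of the algebra generators `xᵢ`, so that every
`xᵢ ^ (d / dᵢ)` has degree `d`. The ideal `J` they generate has the same radical as the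
irrelevant ideal `(x₁, …, xₜ)`, which is finitely generated, so `J` contains a power of it
and hence every homogeneous element of large degree. If `M` is generated in degrees `≤ n₀`,
an element of `Mⁿ⁺ᵈ` with `n` large is then a combination `∑ xᵢ ^ (d / dᵢ) • mᵢ` with
`mᵢ ∈ Mⁿ`. Thus `Mⁿ = 0` forces `Mⁿ⁺ᵈ = 0` for large `n`: in each residue class mod `d`,
the graded pieces are eventually either all zero or all nonzero.
-/

open DirectSum Filter

theorem exists_lt_forall_mod_eq_not_of_not_eventually {Q : ℕ → Prop} {d m₀ : ℕ} (hd : 0 < d)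
    (hQ : ¬∀ᶠ n in atTop, Q n) (hstep : ∀ n ≥ m₀, Q n → Q (n + d)) :
    ∃ j < d, ∀ n ≥ m₀, n % d = j → ¬Q n := by
  obtain ⟨j, hj⟩ : ∃ j : Fin d, ∃ᶠ n in atTop, n % d = j ∧ ¬Q n := by
    by_contra! h
    exact hQ ((eventually_all.mpr h).mono fun n hn => hn ⟨n % d, Nat.mod_lt n hd⟩ rfl)
  refine ⟨j, j.2, fun n hn hnj hQn => ?_⟩
  have hQ_add : ∀ k, Q (n + d * k) := by
    intro k
    induction k with
    | zero => simpa using hQn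
    | succ k ih => simpa [mul_add, add_assoc] using hstep _ (by omega) ih
  obtain ⟨n', hn', hn'j, hQn'⟩ := frequently_atTop.mp hj n
  obtain ⟨k, hk⟩ := (Nat.modEq_iff_dvd' hn').mp (hnj.trans hn'j.symm)
  exact hQn' (by simpa [← hk, Nat.add_sub_cancel' hn'] using hQ_add k)

section GradedModule

variable {S M σ τ : Type*} [CommSemiring S] [AddCommMonoid M] [Module S M]
  [SetLike σ S] (𝒜 : ℕ → σ)
  [SetLike τ M] [AddSubmonoidClass τ M] (ℳ : ℕ → τ) [SetLike.GradedSMul 𝒜 ℳ]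
  [Decomposition ℳ]

theorem coe_decompose_smul_add_of_left_mem {a : S} {i : ℕ} (ha : a ∈ 𝒜 i) (w : M) (k : ℕ) :
    (decompose ℳ (a • w) (i + k) : M) = a • (decompose ℳ w k : M) := by
  induction w using Decomposition.inductionOn ℳ with
  | zero => simp
  | @homogeneous j m =>
    have hm : a • (m : M) ∈ ℳ (i + j) := SetLike.GradedSMul.smul_mem ha m.2
    by_cases hkj : k = j
    · subst hkj
      rw [decompose_of_mem_same ℳ hm, decompose_of_mem_same ℳ m.2]
    · rw [decompose_of_mem_ne ℳ hm (by omega), decompose_of_mem_ne ℳ m.2 (Ne.symm hkj),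
        smul_zero]
  | add w w' hw hw' =>
    simp only [smul_add, decompose_add, DirectSum.add_apply, AddMemClass.coe_add, hw, hw']

theorem coe_decompose_smul_add_of_right_mem [AddSubmonoidClass σ S] [GradedRing 𝒜] {g : M}
    {e : ℕ} (hg : g ∈ ℳ e) (r : S) (D : ℕ) :
    (decompose ℳ (r • g) (D + e) : M) = (decompose 𝒜 r D : S) • g := by
  induction r using Decomposition.inductionOn 𝒜 with
  | zero => simp
  | @homogeneous i a =>
    have ha : (a : S) • g ∈ ℳ (i + e) := SetLike.GradedSMul.smul_mem a.2 hg
    by_cases hDi : D = i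
    · subst hDi
      rw [decompose_of_mem_same ℳ ha, decompose_of_mem_same 𝒜 a.2]
    · rw [decompose_of_mem_ne ℳ ha (by omega), decompose_of_mem_ne 𝒜 a.2 (Ne.symm hDi),
        zero_smul]
  | add r r' hr hr' =>
    simp only [add_smul, decompose_add, DirectSum.add_apply, AddMemClass.coe_add, hr, hr']

theorem coe_decompose_smul_add_eq_zero_of_mem_span {d n : ℕ} {s : Set S}
    (hs : s ⊆ 𝒜 d) (hn : ∀ m ∈ ℳ n, m = 0) {a : S} (ha : a ∈ Ideal.span s) (w : M) :
    (decompose ℳ (a • w) (n + d) : M) = 0 := by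
  induction ha using Submodule.span_induction generalizing w with
  | mem a ha =>
    rw [add_comm, coe_decompose_smul_add_of_left_mem 𝒜 ℳ (hs ha),
      hn _ (SetLike.coe_mem _), smul_zero]
  | zero => simp
  | add a b _ _ ha hb =>
    simp only [add_smul, decompose_add, DirectSum.add_apply, AddMemClass.coe_add, ha, hb, add_zero]
  | smul r a _ ha => rw [smul_eq_mul, mul_comm, mul_smul, ha]

theorem exists_span_iUnion_le_eq_top [Module.Finite S M] :
    ∃ n₀, Submodule.span S (⋃ e ≤ n₀, (ℳ e : Set M)) = ⊤ := by
  classical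
  obtain ⟨Y, hY⟩ := Module.Finite.fg_top (R := S) (M := M)
  refine ⟨Y.sup fun y => (decompose ℳ y).support.sup id, eq_top_iff.mpr ?_⟩
  rw [← hY, Submodule.span_le]
  intro y hy
  rw [← sum_support_decompose ℳ y]
  refine Submodule.sum_mem _ fun k hk => Submodule.subset_span ?_
  exact Set.mem_biUnion ((Finset.le_sup (f := id) hk).trans
    (Finset.le_sup (f := fun y => (decompose ℳ y).support.sup id) hy)) (SetLike.coe_mem _)

theorem forall_mem_add_eq_zero_of_forall_mem_eq_zero [AddSubmonoidClass σ S] [GradedRing 𝒜]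
    {d n n₀ D₀ : ℕ} {s : Set S} (hs : s ⊆ 𝒜 d)
    (hgen : Submodule.span S (⋃ e ≤ n₀, (ℳ e : Set M)) = ⊤)
    (hD₀ : ∀ D ≥ D₀, (𝒜 D : Set S) ⊆ Ideal.span s) (hn : n₀ + D₀ ≤ n + d)
    (h : ∀ m ∈ ℳ n, m = 0) : ∀ u ∈ ℳ (n + d), u = 0 := by
  intro u hu
  obtain ⟨k, r, g, rfl⟩ := Submodule.mem_span_set'.mp (hgen ▸ Submodule.mem_top (x := u))
  rw [← decompose_of_mem_same ℳ hu, decompose_sum, DFinsupp.finsetSum_apply,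
    AddSubmonoidClass.coe_finsetSum]
  refine Finset.sum_eq_zero fun i _ => ?_
  obtain ⟨e, he, hg⟩ := Set.mem_iUnion₂.mp (g i).2
  obtain ⟨D, hD⟩ : ∃ D, D + e = n + d := ⟨n + d - e, by omega⟩
  have hr : (decompose 𝒜 (r i) D : S) ∈ Ideal.span s := hD₀ D (by omega) (SetLike.coe_mem _)
  rw [← hD, coe_decompose_smul_add_of_right_mem 𝒜 ℳ hg,
    ← decompose_of_mem_same ℳ (SetLike.GradedSMul.smul_mem (SetLike.coe_mem _) hg),
    vadd_eq_add, hD]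
  exact coe_decompose_smul_add_eq_zero_of_mem_span 𝒜 ℳ hs h hr _

end GradedModule

section GradedRing

variable {S σ : Type*} [CommRing S] [SetLike σ S] [AddSubmonoidClass σ S] (𝒜 : ℕ → σ)
  [GradedRing 𝒜] {t : ℕ} {x : Fin t → S} {dx : Fin t → ℕ}

theorem mem_span_range_of_mem_of_pos (hxdeg : ∀ i, x i ∈ 𝒜 (dx i))
    (hgen : Subring.closure ((𝒜 0 : Set S) ∪ Set.range x) = ⊤) {D : ℕ} (hD : 0 < D) {y : S}
    (hy : y ∈ 𝒜 D) : y ∈ Ideal.span (Set.range x) := by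
  set π := Ideal.Quotient.mk (Ideal.span (Set.range x))
  have hπ : ∀ z, π z = π (GradedRing.projZeroRingHom 𝒜 z) := by
    intro z
    refine (Subring.closure_le (t := π.eqLocus (π.comp (GradedRing.projZeroRingHom 𝒜)))).mpr ?_
      (hgen ▸ Subring.mem_top z)
    rintro _ (ha | ⟨i, rfl⟩) <;>
      simp only [SetLike.mem_coe, RingHom.mem_eqLocus, RingHom.comp_apply,
        GradedRing.projZeroRingHom_apply]
    · rw [decompose_of_mem_same 𝒜 ha]
    · by_cases hi : dx i = 0
      · rw [decompose_of_mem_same 𝒜 (hi ▸ hxdeg i)]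
      · rw [decompose_of_mem_ne 𝒜 (hxdeg i) hi, Ideal.Quotient.eq_zero_iff_mem.mpr
          (Ideal.subset_span (Set.mem_range_self i)), map_zero]
  rw [← Ideal.Quotient.eq_zero_iff_mem, hπ, GradedRing.projZeroRingHom_apply,
    decompose_of_mem_ne 𝒜 hy hD.ne', map_zero]

theorem mem_span_range_pow_of_mem (hxdeg : ∀ i, x i ∈ 𝒜 (dx i))
    (hgen : Subring.closure ((𝒜 0 : Set S) ∪ Set.range x) = ⊤) {m : ℕ}
    (hm : ∀ i, dx i ≤ m) (k : ℕ) {D : ℕ} (hD : k * m < D) {y : S} (hy : y ∈ 𝒜 D) :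
    y ∈ Ideal.span (Set.range x) ^ k := by
  induction k generalizing D y with
  | zero => simp
  | succ k ih =>
    rw [add_one_mul] at hD
    obtain ⟨c, hc⟩ := Ideal.mem_span_range_iff_exists_fun.mp
      (mem_span_range_of_mem_of_pos 𝒜 hxdeg hgen (by omega) hy)
    rw [← decompose_of_mem_same 𝒜 hy, ← hc, decompose_sum, DFinsupp.finsetSum_apply,
      AddSubmonoidClass.coe_finsetSum, pow_succ]
    refine Ideal.sum_mem _ fun i _ => ?_
    have hi := hm i
    rw [coe_decompose_mul_of_right_mem_of_le 𝒜 (hxdeg i) (by omega)]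
    exact Ideal.mul_mem_mul (ih (by omega) (SetLike.coe_mem _)) (Ideal.subset_span ⟨i, rfl⟩)

theorem exists_forall_mem_span_range_pow (hxdeg : ∀ i, x i ∈ 𝒜 (dx i))
    (hgen : Subring.closure ((𝒜 0 : Set S) ∪ Set.range x) = ⊤) (e : Fin t → ℕ) :
    ∃ D₀, ∀ D ≥ D₀, (𝒜 D : Set S) ⊆ Ideal.span (Set.range fun i => x i ^ e i) := by
  obtain ⟨N, hN⟩ := Ideal.exists_pow_le_of_le_radical_of_fg (I := Ideal.span (Set.range x))
    (J := Ideal.span (Set.range fun i => x i ^ e i))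
    (Ideal.span_le.mpr (by rintro _ ⟨i, rfl⟩; exact ⟨e i, Ideal.subset_span ⟨i, rfl⟩⟩))
    (Submodule.fg_span (Set.finite_range x))
  refine ⟨N * Finset.univ.sup dx + 1, fun D hD y hy => hN ?_⟩
  exact mem_span_range_pow_of_mem 𝒜 hxdeg hgen (fun i => Finset.le_sup (Finset.mem_univ i)) N
    (by omega) hy

end GradedRing

theorem stmt_7_general {S M : Type*} [CommRing S] [AddCommGroup M] [Module S M]
    (𝒜 : ℕ → AddSubgroup S) [GradedRing 𝒜]
    (S0 : Subring S)
    (ℳ : ℕ → Submodule S0 M) [SetLike.GradedSMul 𝒜 ℳ] [DirectSum.Decomposition ℳ]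
    [Module.Finite S M]
    {t : ℕ} (x : Fin t → S) (dx : Fin t → ℕ) (hdx : ∀ i, 0 < dx i)
    (hxdeg : ∀ i, x i ∈ 𝒜 (dx i))
    (hgen : Subring.closure ((𝒜 0 : Set S) ∪ Set.range x) = ⊤) :
    (∃ N : ℕ, ∀ n ≥ N, ℳ n = ⊥) ∨
    (0 < Finset.univ.lcm dx ∧ ∃ j < Finset.univ.lcm dx, ∃ m₀ : ℕ,
      ∀ n ≥ m₀, n % Finset.univ.lcm dx = j → ℳ n ≠ ⊥) := by
  simp_rw [ne_eq, Submodule.eq_bot_iff]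
  set d := Finset.univ.lcm dx
  by_cases hzero : ∀ᶠ n in atTop, ∀ m ∈ ℳ n, m = 0
  · exact Or.inl (eventually_atTop.mp hzero)
  have hd : 0 < d := Nat.pos_of_ne_zero fun h => by
    obtain ⟨i, -, hi⟩ := Finset.lcm_eq_zero_iff.mp h
    exact (hdx i).ne' hi
  have hs : Set.range (fun i => x i ^ (d / dx i)) ⊆ 𝒜 d := by
    rintro _ ⟨i, rfl⟩
    have := SetLike.pow_mem_graded (d / dx i) (hxdeg i)
    rwa [smul_eq_mul, Nat.div_mul_cancel (Finset.dvd_lcm (Finset.mem_univ i))] at this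
  obtain ⟨D₀, hD₀⟩ := exists_forall_mem_span_range_pow 𝒜 hxdeg hgen fun i => d / dx i
  obtain ⟨n₀, hn₀⟩ := exists_span_iUnion_le_eq_top (S := S) ℳ
  obtain ⟨j, hj, hjne⟩ :=
    exists_lt_forall_mod_eq_not_of_not_eventually (m₀ := n₀ + D₀) hd hzero fun n hn =>
      forall_mem_add_eq_zero_of_forall_mem_eq_zero 𝒜 ℳ hs hn₀ hD₀ (by omega)
  exact Or.inr ⟨hd, j, hj, n₀ + D₀, hjne⟩

/-- Let `S` be a non-negatively graded commutative Noetherian ring such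
that `S⁰` either contains an infinite field or is local with infinite residue field, and
let `M` be a finitely generated non-negatively graded `S`-module.  Then either
`ℳ n = 0` for all `n ≫ 0`, or there are integers `d > 0`, `m₀` and `j` with `0 ≤ j < d`
such that `ℳ n ≠ 0` for every `n ≥ m₀` with `n ≡ j (mod d)`; moreover `d` may be taken
to be the lcm of the degrees of any homogeneous generating set of positive degrees of
`S` over `S⁰`. -/
theorem stmt_7 {S M : Type*} [CommRing S] [AddCommGroup M] [Module S M]
    (𝒜 : ℕ → AddSubgroup S) [GradedRing 𝒜] [IsNoetherianRing S]
    (S0 : Subring S) (hS0 : (S0 : Set S) = (𝒜 0 : Set S))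
    (ℳ : ℕ → Submodule S0 M) [SetLike.GradedSMul 𝒜 ℳ] [DirectSum.Decomposition ℳ]
    [Module.Finite S M]
    (h0 : (∃ K : Subring S, (K : Set S) ⊆ (𝒜 0 : Set S) ∧ IsField K ∧ Infinite K) ∨
      (IsLocalRing S0 ∧ ∀ 𝔪 : Ideal S0, 𝔪.IsMaximal → Infinite (S0 ⧸ 𝔪)))
    {t : ℕ} (x : Fin t → S) (dx : Fin t → ℕ) (hdx : ∀ i, 0 < dx i)
    (hxdeg : ∀ i, x i ∈ 𝒜 (dx i))
    (hgen : Subring.closure ((𝒜 0 : Set S) ∪ Set.range x) = ⊤) :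
    (∃ N : ℕ, ∀ n ≥ N, ℳ n = ⊥) ∨
    (0 < Finset.univ.lcm dx ∧ ∃ j < Finset.univ.lcm dx, ∃ m₀ : ℕ,
      ∀ n ≥ m₀, n % Finset.univ.lcm dx = j → ℳ n ≠ ⊥) :=
  stmt_7_general 𝒜 S0 ℳ x dx hdx hxdeg hgen
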